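/- arXiv:1502.05507 — 5 statements merged into one kernel-verified Lean document; each statement's English description precedes it below -/
import Mathlib

section
/- Let C ⊆ F_q^n be a linear code of dimension k ≥ 1 and let 1 ≤ m ≤ k. Then the m-th generalized Hamming weight satisfies d_m(C) ≥ d_1(C) · (q^m - 1)/(q^m - q^{m-1}). -/
open Filter Topology

/-- The support size of a subcode `D ⊆ F^n`: number of coordinates where some
codeword of `D` is nonzero. -/
noncomputable def codeSupp {F : Type} [Field F] {n : ℕ}
    (D : Submodule F (Fin n → F)) : ℕ :=
  Set.ncard {i : Fin n | ∃ d ∈ D, d i ≠ 0}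

/-- The `m`-th relative generalized Hamming weight of a nested pair `C2 ⊆ C1`. -/
noncomputable def RGHW {F : Type} [Field F] {n : ℕ}
    (m : ℕ) (C1 C2 : Submodule F (Fin n → F)) : ℕ :=
  sInf {w : ℕ | ∃ D : Submodule F (Fin n → F),
    D ≤ C1 ∧ Module.finrank F ↥D = m ∧ D ⊓ C2 = ⊥ ∧ codeSupp D = w}

/-- The `m`-th generalized Hamming weight of a code `C`. -/
noncomputable def GHW {F : Type} [Field F] {n : ℕ}
    (m : ℕ) (C : Submodule F (Fin n → F)) : ℕ :=
  RGHW m C ⊥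

/-- The dual code with respect to the standard bilinear form. -/
def dualCode {F : Type} [Field F] {n : ℕ}
    (C : Submodule F (Fin n → F)) : Submodule F (Fin n → F) where
  carrier := {y | ∀ x ∈ C, ∑ i, x i * y i = 0}
  add_mem' := by
    intro a b ha hb x hx
    simp only [Set.mem_setOf_eq] at *
    simp only [Pi.add_apply, mul_add, Finset.sum_add_distrib, ha x hx, hb x hx, add_zero]
  zero_mem' := by
    intro x hx; simp
  smul_mem' := by
    intro c a ha x hx
    simp only [Set.mem_setOf_eq] at *
    simp only [Pi.smul_apply, smul_eq_mul, mul_left_comm, ← Finset.mul_sum, ha x hx, mul_zero]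

/-- The subspace `V_I` of vectors supported on the coordinate set `I`. -/
def VI (F : Type) [Field F] {n : ℕ} (I : Finset (Fin n)) : Submodule F (Fin n → F) where
  carrier := {x | ∀ i, i ∉ I → x i = 0}
  add_mem' := by intro a b ha hb i hi; simp [ha i hi, hb i hi]
  zero_mem' := by intro i hi; rfl
  smul_mem' := by intro c a ha i hi; simp [ha i hi]

/-- The relative dimension length profile `K_d(C1, C2)`. -/
noncomputable def RDLP {F : Type} [Field F] {n : ℕ}
    (d : ℕ) (C1 C2 : Submodule F (Fin n → F)) : ℕ :=
  sSup {k : ℕ | ∃ I : Finset (Fin n), I.card = d ∧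
    Module.finrank F ↥(C1 ⊓ VI F I) - Module.finrank F ↥(C2 ⊓ VI F I) = k}

/-! The nonzero codewords of an `m`-dimensional subcode `D` have total weight
`codeSupp D · (q^m - q^(m-1))`: on every coordinate of the support, the coordinate functional
is a nonzero linear form on `D`, which vanishes on exactly `q^(m-1)` codewords. Each of the
`q^m - 1` nonzero codewords has weight at least `d_1`, and `D` can be chosen with
`codeSupp D = d_m`. -/

open Finset
open scoped Classical

theorem Module.Dual.card_filter_ne_zero {K V : Type*} [Field K] [Fintype K]
    [AddCommGroup V] [Module K V] [Fintype V] {f : Module.Dual K V} (hf : f ≠ 0) :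
    #{x | f x ≠ 0} = Fintype.card K ^ Module.finrank K V
      - Fintype.card K ^ (Module.finrank K V - 1) := by
  have hker : Module.finrank K (LinearMap.ker f) + 1 = Module.finrank K V :=
    Module.Dual.finrank_ker_add_one_of_ne_zero hf
  have hzero : #{x | f x = 0} = Fintype.card K ^ (Module.finrank K V - 1) := by
    rw [← hker, Nat.add_sub_cancel, ← Module.card_eq_pow_finrank, Fintype.card_subtype]
    simp only [LinearMap.mem_ker]
  rw [← Module.card_eq_pow_finrank, ← hzero, ← card_univ]
  exact Nat.eq_sub_of_add_eq' (card_filter_add_card_filter_not _)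

theorem codeSupp_eq_card {F : Type} [Field F] {n : ℕ}
    (D : Submodule F (Fin n → F)) : codeSupp D = #{i | ∃ d ∈ D, d i ≠ 0} := by
  rw [codeSupp, ← Set.ncard_coe_finset]
  simp

theorem codeSupp_span_singleton {F : Type} [Field F] {n : ℕ} (c : Fin n → F) :
    codeSupp (Submodule.span F {c}) = hammingNorm c := by
  rw [codeSupp_eq_card, hammingNorm]
  congr 1
  ext i
  simp only [mem_filter, mem_univ, true_and, Submodule.mem_span_singleton]
  constructor
  · rintro ⟨_, ⟨a, rfl⟩, hai⟩ hi
    simp [hi] at hai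
  · exact fun hi => ⟨c, ⟨1, one_smul F c⟩, hi⟩

theorem GHW_one_le_hammingNorm {F : Type} [Field F] {n : ℕ}
    {C : Submodule F (Fin n → F)} {c : Fin n → F} (hcC : c ∈ C) (hc : c ≠ 0) :
    GHW 1 C ≤ hammingNorm c := by
  refine Nat.sInf_le ⟨Submodule.span F {c}, ?_, finrank_span_singleton hc, inf_bot_eq _,
    codeSupp_span_singleton c⟩
  rwa [Submodule.span_singleton_le_iff_mem]

theorem exists_codeSupp_eq_GHW {F : Type} [Field F] {n m : ℕ} {C : Submodule F (Fin n → F)}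
    (hm : m ≤ Module.finrank F C) :
    ∃ D ≤ C, Module.finrank F D = m ∧ codeSupp D = GHW m C := by
  obtain ⟨v, hv⟩ := exists_linearIndependent_of_le_finrank hm
  have hD : Module.finrank F (Submodule.span F (Set.range (C.subtype ∘ v))) = m := by
    rw [finrank_span_eq_card (hv.map' C.subtype C.ker_subtype), Fintype.card_fin]
  have hne : {w | ∃ D ≤ C, Module.finrank F D = m ∧ D ⊓ ⊥ = ⊥ ∧ codeSupp D = w}.Nonempty :=
    ⟨_, _, Submodule.span_le.mpr (by rintro _ ⟨i, rfl⟩; exact (v i).2), hD, inf_bot_eq _, rfl⟩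
  obtain ⟨D, hDC, hDm, -, hDsupp⟩ := Nat.sInf_mem hne
  exact ⟨D, hDC, hDm, hDsupp⟩

section DoubleCounting

variable {F : Type} [Field F] [Fintype F] {n : ℕ}
  (D : Submodule F (Fin n → F))

theorem card_filter_apply_ne_zero (i : Fin n) :
    #{c : D | (c : Fin n → F) i ≠ 0} = if ∃ d ∈ D, d i ≠ 0 then
      Fintype.card F ^ Module.finrank F D - Fintype.card F ^ (Module.finrank F D - 1) else 0 := by
  split_ifs with hi
  · obtain ⟨d, hdD, hdi⟩ := hi
    have hf : (LinearMap.proj i).comp D.subtype ≠ 0 := fun h =>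
      hdi (LinearMap.congr_fun h ⟨d, hdD⟩)
    exact Module.Dual.card_filter_ne_zero hf
  · push Not at hi
    exact card_eq_zero.mpr (filter_eq_empty_iff.mpr fun c _ => not_not.mpr (hi c c.2))

theorem sum_hammingNorm_eq_codeSupp_mul :
    ∑ c : D, hammingNorm (c : Fin n → F) = codeSupp D *
      (Fintype.card F ^ Module.finrank F D - Fintype.card F ^ (Module.finrank F D - 1)) := by
  calc ∑ c : D, hammingNorm (c : Fin n → F)
      = ∑ i, #{c : D | (c : Fin n → F) i ≠ 0} :=
        sum_card_bipartiteAbove_eq_sum_card_bipartiteBelow (s := univ) (t := univ)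
          (fun (c : D) (i : Fin n) => (c : Fin n → F) i ≠ 0)
    _ = _ := by
        simp_rw [card_filter_apply_ne_zero, ← sum_filter, sum_const, smul_eq_mul,
          codeSupp_eq_card]
        congr

theorem card_sub_one_mul_GHW_one_le_sum_hammingNorm {C : Submodule F (Fin n → F)}
    (hDC : D ≤ C) : (Fintype.card D - 1) * GHW 1 C ≤ ∑ c : D, hammingNorm (c : Fin n → F) := by
  rw [← sum_erase univ (a := 0) (by simp), ← card_univ, ← card_erase_of_mem (mem_univ 0),
    ← smul_eq_mul]
  refine card_nsmul_le_sum _ _ _ fun c hc => GHW_one_le_hammingNorm (hDC c.2) ?_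
  simpa using ne_of_mem_erase hc

end DoubleCounting

theorem GHW_one_mul_le_GHW_mul {F : Type} [Field F] [Fintype F] {n m : ℕ}
    {C : Submodule F (Fin n → F)} (hm : m ≤ Module.finrank F C) :
    (Fintype.card F ^ m - 1) * GHW 1 C
      ≤ GHW m C * (Fintype.card F ^ m - Fintype.card F ^ (m - 1)) := by
  obtain ⟨D, hDC, hDm, hDsupp⟩ := exists_codeSupp_eq_GHW hm
  calc (Fintype.card F ^ m - 1) * GHW 1 C
      = (Fintype.card D - 1) * GHW 1 C := by
        rw [Module.card_eq_pow_finrank (K := F) (V := D), hDm]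
    _ ≤ ∑ c : D, hammingNorm (c : Fin n → F) := card_sub_one_mul_GHW_one_le_sum_hammingNorm D hDC
    _ = GHW m C * (Fintype.card F ^ m - Fintype.card F ^ (m - 1)) := by
        rw [sum_hammingNorm_eq_codeSupp_mul, hDsupp, hDm]

theorem ghw_ge_first_ghw_ratio_general {F : Type} [Field F] [Fintype F] {n k m : ℕ}
    (C : Submodule F (Fin n → F)) (hk : Module.finrank F ↥C = k)
    (hm1 : 1 ≤ m) (hmk : m ≤ k) :
    (GHW m C : ℝ) ≥ (GHW 1 C : ℝ) *
      (((Fintype.card F : ℝ) ^ m - 1) /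
        ((Fintype.card F : ℝ) ^ m - (Fintype.card F : ℝ) ^ (m - 1))) := by
  have key := GHW_one_mul_le_GHW_mul (C := C) (hk ▸ hmk)
  have hq : 1 < Fintype.card F := Fintype.one_lt_card
  have hpow : Fintype.card F ^ (m - 1) < Fintype.card F ^ m :=
    Nat.pow_lt_pow_right hq (Nat.sub_lt hm1 Nat.one_pos)
  have hpos : (0 : ℝ) < (Fintype.card F : ℝ) ^ m - (Fintype.card F : ℝ) ^ (m - 1) := by
    rw [sub_pos]
    exact_mod_cast hpow
  rw [ge_iff_le, ← mul_div_assoc, div_le_iff₀ hpos]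
  rw [← Nat.cast_le (α := ℝ), Nat.cast_mul, Nat.cast_mul,
    Nat.cast_sub (Nat.one_le_pow _ _ (by omega)), Nat.cast_sub hpow.le] at key
  push_cast at key
  linarith

/-- For a linear code `C ⊆ F_q^n` of dimension `k ≥ 1` and `1 ≤ m ≤ k`,
`d_m(C) ≥ d_1(C) · (q^m - 1)/(q^m - q^(m-1))`. -/
theorem ghw_ge_first_ghw_ratio {F : Type} [Field F] [Fintype F] {n k m : ℕ}
    (C : Submodule F (Fin n → F)) (hk : Module.finrank F ↥C = k)
    (hk1 : 1 ≤ k) (hm1 : 1 ≤ m) (hmk : m ≤ k) :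
    (GHW m C : ℝ) ≥ (GHW 1 C : ℝ) *
      (((Fintype.card F : ℝ) ^ m - 1) /
        ((Fintype.card F : ℝ) ^ m - (Fintype.card F : ℝ) ^ (m - 1))) :=
  ghw_ge_first_ghw_ratio_general C hk hm1 hmk
end

section
/- Let C ⊆ F_q^n be a linear code of dimension k with 0 < k < n. Writing d_r = d_r(C) for 1 ≤ r ≤ k and d_s^⊥ = d_s(C^⊥) for 1 ≤ s ≤ n-k, the set {1, 2, ..., n} equals the (disjoint) union {d_1, ..., d_k} ∪ {n+1-d_{n-k}^⊥, ..., n+1-d_1^⊥}. -/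
open Filter Topology

namespace WeiAux

open Module Submodule

variable {F : Type} [Field F] {n : ℕ}

lemma mem_VI {I : Finset (Fin n)} {x : Fin n → F} : x ∈ VI F I ↔ ∀ i ∉ I, x i = 0 :=
  Iff.rfl

lemma VI_mono {I J : Finset (Fin n)} (h : I ⊆ J) : VI F I ≤ VI F J := by
  intro x hx i hi
  exact hx i (fun hI => hi (h hI))

lemma VI_univ : VI F (Finset.univ : Finset (Fin n)) = ⊤ := by
  ext x; simp [mem_VI]

/-- `VI F I` is linearly equivalent to functions on `I`. -/
noncomputable def VIequiv (I : Finset (Fin n)) : ↥(VI F I) ≃ₗ[F] (↥I → F) := by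
  refine LinearEquiv.ofBijective
    ({ toFun := fun x i => (x : Fin n → F) i
       map_add' := fun x y => rfl
       map_smul' := fun c x => rfl } : ↥(VI F I) →ₗ[F] (↥I → F)) ⟨?_, ?_⟩
  · intro x y hxy
    ext i
    by_cases hi : i ∈ I
    · exact congrFun hxy ⟨i, hi⟩
    · rw [x.2 i hi, y.2 i hi]
  · intro f
    refine ⟨⟨fun j => if h : j ∈ I then f ⟨j, h⟩ else 0, ?_⟩, ?_⟩
    · intro i hi; simp [hi]
    · ext i; simp

lemma finrank_VI (I : Finset (Fin n)) : finrank F ↥(VI F I) = I.card := by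
  rw [(VIequiv I).finrank_eq]
  simp [Module.finrank_pi]

lemma mem_dualCode {C : Submodule F (Fin n → F)} {y : Fin n → F} :
    y ∈ dualCode C ↔ ∀ x ∈ C, ∑ i, x i * y i = 0 := Iff.rfl

/-- The evaluation map to the dual of `C`. -/
noncomputable def evDual (C : Submodule F (Fin n → F)) :
    (Fin n → F) →ₗ[F] Module.Dual F ↥C where
  toFun y :=
    { toFun := fun x => ∑ i, (x : Fin n → F) i * y i
      map_add' := by
        intro a b
        simp [add_mul, Finset.sum_add_distrib]
      map_smul' := by
        intro c a
        simp [Finset.mul_sum, mul_assoc] }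
  map_add' := by
    intro a b
    ext x
    simp [mul_add, Finset.sum_add_distrib]
  map_smul' := by
    intro c a
    ext x
    simp [Finset.mul_sum, mul_left_comm]

lemma ker_evDual (C : Submodule F (Fin n → F)) :
    LinearMap.ker (evDual C) = dualCode C := by
  ext y
  simp only [LinearMap.mem_ker]
  constructor
  · intro h x hx
    exact DFunLike.congr_fun h ⟨x, hx⟩
  · intro h
    ext x
    exact h x.1 x.2

lemma surjective_evDual (C : Submodule F (Fin n → F)) :
    Function.Surjective (evDual C) := by
  intro f
  obtain ⟨g, hg⟩ := LinearMap.exists_extend f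
  refine ⟨fun i => g (fun j => if i = j then 1 else 0), ?_⟩
  ext x
  have := LinearMap.pi_apply_eq_sum_univ g (x : Fin n → F)
  have hx : g (x : Fin n → F) = f x := congrFun (congrArg DFunLike.coe hg) x
  simp only [evDual, LinearMap.coe_mk, AddHom.coe_mk]
  rw [← hx, this]
  simp [smul_eq_mul]

lemma finrank_dualCode_add (C : Submodule F (Fin n → F)) :
    finrank F ↥(dualCode C) + finrank F ↥C = n := by
  have h := LinearMap.finrank_range_add_finrank_ker (evDual C)
  rw [ker_evDual, LinearMap.range_eq_top.2 (surjective_evDual C)] at h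
  have hd : finrank F (Module.Dual F ↥C) = finrank F ↥C := Subspace.dual_finrank_eq
  have hn : finrank F (Fin n → F) = n := by simp
  rw [finrank_top, hd, hn] at h
  omega

lemma le_dualCode_dualCode (C : Submodule F (Fin n → F)) :
    C ≤ dualCode (dualCode C) := by
  intro x hx y hy
  rw [show ∑ i, y i * x i = ∑ i, x i * y i from Finset.sum_congr rfl fun i _ => mul_comm _ _]
  exact hy x hx

lemma dualCode_dualCode (C : Submodule F (Fin n → F)) :
    dualCode (dualCode C) = C := by
  have h1 := finrank_dualCode_add C
  have h2 := finrank_dualCode_add (dualCode C)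
  exact (Submodule.eq_of_le_of_finrank_le (le_dualCode_dualCode C) (by omega)).symm

lemma dualCode_sup (A B : Submodule F (Fin n → F)) :
    dualCode (A ⊔ B) = dualCode A ⊓ dualCode B := by
  ext y
  constructor
  · intro h
    exact ⟨fun x hx => h x (le_sup_left (a := A) (b := B) hx),
      fun x hx => h x (le_sup_right (a := A) (b := B) hx)⟩
  · rintro ⟨h1, h2⟩ x hx
    rcases Submodule.mem_sup.1 hx with ⟨a, ha, b, hb, rfl⟩
    simp [Pi.add_apply, add_mul, Finset.sum_add_distrib, h1 a ha, h2 b hb]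

lemma dualCode_VI (I : Finset (Fin n)) :
    dualCode (VI F I) = VI F Iᶜ := by
  ext y
  constructor
  · intro h i hi
    have hiI : i ∈ I := by simpa using hi
    have hmem : (fun j => if i = j then (1:F) else 0) ∈ VI F I := by
      intro j hj
      have : i ≠ j := fun hij => hj (hij ▸ hiI)
      simp [this]
    have := h _ hmem
    simpa using this
  · intro h x hx
    apply Finset.sum_eq_zero
    intro i _
    by_cases hi : i ∈ I
    · have : y i = 0 := h i (by simpa using hi)
      simp [this]
    · rw [hx i hi, zero_mul]

/-- The key dimension identity. -/
lemma key_identity (C : Submodule F (Fin n → F)) (I : Finset (Fin n)) :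
    finrank F ↥(C ⊓ VI F I) + n
      = finrank F ↥C + I.card + finrank F ↥(dualCode C ⊓ VI F Iᶜ) := by
  have h1 := Submodule.finrank_sup_add_finrank_inf_eq C (VI F I)
  have h2 := finrank_dualCode_add (C ⊔ VI F I)
  rw [dualCode_sup, dualCode_VI] at h2
  rw [finrank_VI] at h1
  omega


/-! ### The dimension profile `g` -/

/-- `g C t` is the maximum of `dim (C ⊓ V_I)` over coordinate sets `I` of size `t`. -/
noncomputable def g (C : Submodule F (Fin n → F)) (t : ℕ) : ℕ :=
  (Finset.univ.filter fun I : Finset (Fin n) => I.card = t).sup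
    fun I => finrank F ↥(C ⊓ VI F I)

lemma le_g {C : Submodule F (Fin n → F)} {I : Finset (Fin n)} :
    finrank F ↥(C ⊓ VI F I) ≤ g C I.card :=
  Finset.le_sup (f := fun I : Finset (Fin n) => finrank F ↥(C ⊓ VI F I)) (by simp)

lemma g_attained (C : Submodule F (Fin n → F)) {t : ℕ} (ht : t ≤ n) :
    ∃ I : Finset (Fin n), I.card = t ∧ g C t = finrank F ↥(C ⊓ VI F I) := by
  obtain ⟨I, -, hI⟩ := Finset.exists_subset_card_eq (s := (Finset.univ : Finset (Fin n))) (n := t) (by rw [Finset.card_univ, Fintype.card_fin]; exact ht)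
  obtain ⟨J, hJ, hJ'⟩ := Finset.exists_mem_eq_sup
    (Finset.univ.filter fun I : Finset (Fin n) => I.card = t)
    ⟨I, Finset.mem_filter.2 ⟨Finset.mem_univ I, hI⟩⟩
    (fun I : Finset (Fin n) => finrank F ↥(C ⊓ VI F I))
  exact ⟨J, by simpa using (Finset.mem_filter.1 hJ).2, hJ'⟩

lemma g_zero (C : Submodule F (Fin n → F)) : g C 0 = 0 := by
  apply Nat.le_zero.1
  apply Finset.sup_le
  intro I hI
  have hI0 : I = ∅ := Finset.card_eq_zero.1 (by simpa using (Finset.mem_filter.1 hI).2)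
  subst hI0
  have hbot : VI F (∅ : Finset (Fin n)) = ⊥ := by
    ext x; simp [mem_VI, funext_iff]
  rw [hbot, inf_bot_eq]
  simp

lemma g_n (C : Submodule F (Fin n → F)) : g C n = finrank F ↥C := by
  apply le_antisymm
  · apply Finset.sup_le
    intro I hI
    exact Submodule.finrank_mono inf_le_left
  · have h := le_g (C := C) (I := (Finset.univ : Finset (Fin n)))
    rw [VI_univ, inf_top_eq] at h
    simpa using h

lemma g_le_succ (C : Submodule F (Fin n → F)) {t : ℕ} (ht : t < n) :
    g C t ≤ g C (t + 1) := by
  apply Finset.sup_le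
  intro I hI
  have hcard : I.card = t := by simpa using (Finset.mem_filter.1 hI).2
  have hcompl : Iᶜ.Nonempty := by
    rw [← Finset.card_pos, Finset.card_compl]
    simp only [Fintype.card_fin, hcard]
    omega
  obtain ⟨i, hi⟩ := hcompl
  have hins : (insert i I).card = t + 1 := by
    rw [Finset.card_insert_of_notMem (by simpa using hi), hcard]
  calc finrank F ↥(C ⊓ VI F I) ≤ finrank F ↥(C ⊓ VI F (insert i I)) :=
        Submodule.finrank_mono (inf_le_inf_left _ (VI_mono (Finset.subset_insert i I)))
    _ ≤ g C (t + 1) := hins ▸ le_g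

lemma g_mono (C : Submodule F (Fin n → F)) {t₁ t₂ : ℕ} (h : t₁ ≤ t₂) (h2 : t₂ ≤ n) :
    g C t₁ ≤ g C t₂ := by
  induction t₂, h using Nat.le_induction with
  | base => exact le_rfl
  | succ m hm ih => exact le_trans (ih (by omega)) (g_le_succ C (by omega))

lemma finrank_le_inf_ker (W : Submodule F (Fin n → F)) (f : (Fin n → F) →ₗ[F] F) :
    finrank F ↥W ≤ finrank F ↥(W ⊓ LinearMap.ker f) + 1 := by
  have h := LinearMap.finrank_range_add_finrank_ker (f.domRestrict W)
  have hker : finrank F ↥(LinearMap.ker (f.domRestrict W))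
      = finrank F ↥(W ⊓ LinearMap.ker f) := by
    have h2 : W ⊓ LinearMap.ker f
        = Submodule.map W.subtype (Submodule.comap W.subtype (LinearMap.ker f)) :=
      (Submodule.map_comap_subtype _ _).symm
    rw [h2, Submodule.finrank_map_subtype_eq, LinearMap.ker_domRestrict]
  have hrange : finrank F ↥(LinearMap.range (f.domRestrict W)) ≤ 1 := by
    have h3 := Submodule.finrank_le (LinearMap.range (f.domRestrict W))
    simpa using h3
  omega

lemma g_succ_le (C : Submodule F (Fin n → F)) {t : ℕ} (ht : 1 ≤ t) :
    g C t ≤ g C (t - 1) + 1 := by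
  apply Finset.sup_le
  intro I hI
  have hcard : I.card = t := by simpa using (Finset.mem_filter.1 hI).2
  have hne : I.Nonempty := Finset.card_pos.1 (by omega)
  obtain ⟨i, hi⟩ := hne
  have herase : (I.erase i).card = t - 1 := by rw [Finset.card_erase_of_mem hi, hcard]
  have hVI : C ⊓ VI F (I.erase i)
      = (C ⊓ VI F I) ⊓ LinearMap.ker (LinearMap.proj i (R := F) (φ := fun _ : Fin n => F)) := by
    ext x
    simp only [Submodule.mem_inf, mem_VI, LinearMap.mem_ker, LinearMap.proj_apply]
    constructor
    · rintro ⟨hC, hx⟩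
      exact ⟨⟨hC, fun j hj => hx j (fun hje => hj (Finset.mem_of_mem_erase hje))⟩,
        hx i (Finset.notMem_erase i I)⟩
    · rintro ⟨⟨hC, hx⟩, hxi⟩
      refine ⟨hC, fun j hj => ?_⟩
      by_cases hji : j = i
      · subst hji; exact hxi
      · exact hx j (fun hjI => hj (Finset.mem_erase.2 ⟨hji, hjI⟩))
  calc finrank F ↥(C ⊓ VI F I)
      ≤ finrank F ↥((C ⊓ VI F I) ⊓ LinearMap.ker
          (LinearMap.proj i (R := F) (φ := fun _ : Fin n => F))) + 1 :=
        finrank_le_inf_ker _ _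
    _ = finrank F ↥(C ⊓ VI F (I.erase i)) + 1 := by rw [hVI]
    _ ≤ g C (t - 1) + 1 := by
        have h4 := le_g (C := C) (I := I.erase i)
        rw [herase] at h4
        omega

/-- The duality identity for the profiles of `C` and its dual. -/
lemma g_dual (C : Submodule F (Fin n → F)) {t : ℕ} (ht : t ≤ n) :
    g C t + n = finrank F ↥C + t + g (dualCode C) (n - t) := by
  apply le_antisymm
  · obtain ⟨I, hIcard, hIeq⟩ := g_attained C ht
    have hkey := key_identity C I
    have hIc : Iᶜ.card = n - t := by
      rw [Finset.card_compl, hIcard]; simp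
    have h2 : finrank F ↥(dualCode C ⊓ VI F Iᶜ) ≤ g (dualCode C) (n - t) := hIc ▸ le_g
    omega
  · obtain ⟨J, hJcard, hJeq⟩ := g_attained (dualCode C) (Nat.sub_le n t)
    have hkey := key_identity C Jᶜ
    rw [compl_compl] at hkey
    have hJc : (Jᶜ).card = t := by
      rw [Finset.card_compl, hJcard]; simp; omega
    have h2 : finrank F ↥(C ⊓ VI F Jᶜ) ≤ g C t := hJc ▸ le_g
    omega

/-! ### Characterization of GHW via `g` -/

lemma exists_submodule (W : Submodule F (Fin n → F)) {r : ℕ} (hr : r ≤ finrank F ↥W) :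
    ∃ D : Submodule F (Fin n → F), D ≤ W ∧ finrank F ↥D = r := by
  obtain ⟨s, hs, hli⟩ := exists_finset_linearIndependent_of_le_finrank hr
  refine ⟨Submodule.map W.subtype (Submodule.span F ↑s), Submodule.map_subtype_le _ _, ?_⟩
  rw [Submodule.finrank_map_subtype_eq, finrank_span_finset_eq_card hli, hs]

lemma ghw_eq (W : Submodule F (Fin n → F)) (r : ℕ) :
    GHW r W = sInf {w : ℕ | ∃ D : Submodule F (Fin n → F),
      D ≤ W ∧ finrank F ↥D = r ∧ codeSupp D = w} := by
  unfold GHW RGHW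
  congr 1
  ext w
  constructor
  · rintro ⟨D, h1, h2, -, h4⟩
    exact ⟨D, h1, h2, h4⟩
  · rintro ⟨D, h1, h2, h4⟩
    exact ⟨D, h1, h2, inf_bot_eq _, h4⟩

lemma codeSupp_le_of_le_VI {D : Submodule F (Fin n → F)} {I : Finset (Fin n)}
    (h : D ≤ VI F I) : codeSupp D ≤ I.card := by
  rw [codeSupp, ← Set.ncard_coe_finset]
  apply Set.ncard_le_ncard _ (Finset.finite_toSet I)
  rintro i ⟨d, hd, hdi⟩
  by_contra hi
  exact hdi (h hd i hi)

lemma le_VI_suppFinset (D : Submodule F (Fin n → F)) :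
    ∃ I : Finset (Fin n), I.card = codeSupp D ∧ D ≤ VI F I := by
  have hfin : {i : Fin n | ∃ d ∈ D, d i ≠ 0}.Finite := Set.toFinite _
  refine ⟨hfin.toFinset, ?_, ?_⟩
  · rw [codeSupp, Set.ncard_eq_toFinset_card _ hfin]
  · intro d hd i hi
    by_contra h0
    exact hi (hfin.mem_toFinset.2 ⟨d, hd, h0⟩)

lemma ghw_le_iff (W : Submodule F (Fin n → F)) {r t : ℕ} (hr : r ≤ finrank F ↥W)
    (ht : t ≤ n) : GHW r W ≤ t ↔ r ≤ g W t := by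
  rw [ghw_eq]
  constructor
  · intro h
    have hne : {w : ℕ | ∃ D : Submodule F (Fin n → F),
        D ≤ W ∧ finrank F ↥D = r ∧ codeSupp D = w}.Nonempty := by
      obtain ⟨D, hDW, hDr⟩ := exists_submodule W hr
      exact ⟨codeSupp D, D, hDW, hDr, rfl⟩
    obtain ⟨D, hDW, hDr, hDs⟩ := Nat.sInf_mem hne
    obtain ⟨I, hIcard, hIle⟩ := le_VI_suppFinset D
    have h1 : r ≤ finrank F ↥(W ⊓ VI F I) :=
      hDr ▸ Submodule.finrank_mono (le_inf hDW hIle)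
    have h2 : finrank F ↥(W ⊓ VI F I) ≤ g W I.card := le_g
    have h3 : I.card ≤ t := by rw [hIcard, hDs]; exact h
    exact le_trans h1 (le_trans h2 (g_mono W h3 ht))
  · intro hgt
    obtain ⟨I, hIcard, hIeq⟩ := g_attained W ht
    have hrI : r ≤ finrank F ↥(W ⊓ VI F I) := hIeq ▸ hgt
    obtain ⟨D, hDle, hDr⟩ := exists_submodule (W ⊓ VI F I) hrI
    have hsupp : codeSupp D ≤ t := hIcard ▸ codeSupp_le_of_le_VI (hDle.trans inf_le_right)
    exact le_trans (Nat.sInf_le ⟨D, hDle.trans inf_le_left, hDr, rfl⟩) hsupp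

lemma ghw_pos (W : Submodule F (Fin n → F)) {r : ℕ} (hr1 : 1 ≤ r)
    (hr : r ≤ finrank F ↥W) : 1 ≤ GHW r W := by
  by_contra h
  have h0 : GHW r W ≤ 0 := by omega
  have h1 := (ghw_le_iff W hr (Nat.zero_le n)).1 h0
  rw [g_zero] at h1
  omega

lemma ghw_le_n (W : Submodule F (Fin n → F)) {r : ℕ} (hr : r ≤ finrank F ↥W) :
    GHW r W ≤ n :=
  (ghw_le_iff W hr le_rfl).2 (by rw [g_n]; exact hr)

lemma ghw_jump_iff (W : Submodule F (Fin n → F)) {t : ℕ} (ht1 : 1 ≤ t) (htn : t ≤ n) :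
    (∃ r, 1 ≤ r ∧ r ≤ finrank F ↥W ∧ GHW r W = t) ↔ g W t = g W (t - 1) + 1 := by
  constructor
  · rintro ⟨r, hr1, hrk, hrt⟩
    have h1 : r ≤ g W t := (ghw_le_iff W hrk htn).1 (le_of_eq hrt)
    have h2 : ¬ r ≤ g W (t - 1) := by
      intro hc
      have h5 := (ghw_le_iff W hrk (by omega)).2 hc
      omega
    have h3 := g_succ_le W ht1
    have h4 := g_mono W (Nat.sub_le t 1) htn
    omega
  · intro hjump
    have hk' : g W t ≤ finrank F ↥W := by
      have h5 := g_mono W htn le_rfl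
      rw [g_n] at h5
      exact h5
    refine ⟨g W t, by omega, hk', ?_⟩
    apply le_antisymm
    · exact (ghw_le_iff W hk' htn).2 le_rfl
    · by_contra hlt
      have hle : GHW (g W t) W ≤ t - 1 := by omega
      have h6 := (ghw_le_iff W hk' (by omega)).1 hle
      omega

end WeiAux

open WeiAux in
/-- Wei's duality theorem: for a linear code `C ⊆ F_q^n` of dimension `k`,
`{1, …, n} = {d_1(C), …, d_k(C)} ∪ {n+1-d_{n-k}(C^⊥), …, n+1-d_1(C^⊥)}`,
and the union is disjoint. -/
theorem wei_duality {F : Type} [Field F] [Fintype F] {n k : ℕ}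
    (C : Submodule F (Fin n → F)) (hk : Module.finrank F ↥C = k)
    (hk0 : 0 < k) (hkn : k < n) :
    Set.Icc 1 n =
      ((fun r => GHW r C) '' Set.Icc 1 k) ∪
        ((fun s => n + 1 - GHW s (dualCode C)) '' Set.Icc 1 (n - k)) ∧
    Disjoint ((fun r => GHW r C) '' Set.Icc 1 k)
      ((fun s => n + 1 - GHW s (dualCode C)) '' Set.Icc 1 (n - k)) := by
  classical
  have hdim := WeiAux.finrank_dualCode_add C
  rw [hk] at hdim
  have hdual : Module.finrank F ↥(dualCode C) = n - k := by omega
  have hrel : ∀ t, 1 ≤ t → t ≤ n →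
      ((g C t = g C (t-1) + 1) ↔
        ¬ (g (dualCode C) (n+1-t) = g (dualCode C) (n+1-t-1) + 1)) := by
    intro t ht1 htn
    have hA := g_dual C (show t ≤ n from htn)
    have hA' := g_dual C (show t - 1 ≤ n by omega)
    have e1 : n - (t-1) = n - t + 1 := by omega
    rw [e1] at hA'
    have e2 : n + 1 - t = n - t + 1 := by omega
    have e3 : n + 1 - t - 1 = n - t := by omega
    rw [e3, e2]
    have hb1 : g (dualCode C) (n - t + 1) ≤ g (dualCode C) (n - t) + 1 :=
      g_succ_le _ (by omega)
    have hb2 : g (dualCode C) (n - t) ≤ g (dualCode C) (n - t + 1) :=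
      g_mono _ (by omega) (by omega)
    have hc1 : g C t ≤ g C (t-1) + 1 := g_succ_le _ ht1
    have hc2 : g C (t-1) ≤ g C t := g_mono _ (by omega) htn
    rw [hk] at hA hA'
    omega
  have hmemC : ∀ t, t ∈ ((fun r => GHW r C) '' Set.Icc 1 k) ↔
      (1 ≤ t ∧ t ≤ n ∧ g C t = g C (t-1) + 1) := by
    intro t
    constructor
    · rintro ⟨r, ⟨hr1, hrk⟩, rfl⟩
      have hrk' : r ≤ Module.finrank F ↥C := by rw [hk]; exact hrk
      have h1 := ghw_pos C hr1 hrk'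
      have h2 := ghw_le_n C hrk'
      exact ⟨h1, h2, (ghw_jump_iff C h1 h2).1 ⟨r, hr1, hrk', rfl⟩⟩
    · rintro ⟨h1, h2, hj⟩
      obtain ⟨r, hr1, hrk, hrt⟩ := (ghw_jump_iff C h1 h2).2 hj
      exact ⟨r, ⟨hr1, by rw [← hk]; exact hrk⟩, hrt⟩
  have hmemD : ∀ t, t ∈ ((fun s => n + 1 - GHW s (dualCode C)) '' Set.Icc 1 (n-k)) ↔
      (1 ≤ t ∧ t ≤ n ∧ g (dualCode C) (n+1-t) = g (dualCode C) (n+1-t-1) + 1) := by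
    intro t
    constructor
    · rintro ⟨s, ⟨hs1, hsk⟩, rfl⟩
      have hsk' : s ≤ Module.finrank F ↥(dualCode C) := by rw [hdual]; exact hsk
      have h1 := ghw_pos (dualCode C) hs1 hsk'
      have h2 := ghw_le_n (dualCode C) hsk'
      have ht1 : 1 ≤ n + 1 - GHW s (dualCode C) := by omega
      have htn : n + 1 - GHW s (dualCode C) ≤ n := by omega
      have hu : n + 1 - (n + 1 - GHW s (dualCode C)) = GHW s (dualCode C) := by omega
      refine ⟨ht1, htn, ?_⟩
      simp only [hu]
      exact (ghw_jump_iff (dualCode C) h1 h2).1 ⟨s, hs1, hsk', rfl⟩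
    · rintro ⟨h1, h2, hj⟩
      have hu1 : 1 ≤ n + 1 - t := by omega
      have hun : n + 1 - t ≤ n := by omega
      obtain ⟨s, hs1, hsk, hst⟩ := (ghw_jump_iff (dualCode C) hu1 hun).2 hj
      rw [hdual] at hsk
      exact ⟨s, ⟨hs1, hsk⟩, by simp only [hst]; omega⟩
  constructor
  · ext t
    simp only [Set.mem_Icc, Set.mem_union]
    rw [hmemC, hmemD]
    constructor
    · rintro ⟨h1, h2⟩
      by_cases hj : g C t = g C (t-1) + 1
      · exact Or.inl ⟨h1, h2, hj⟩
      · refine Or.inr ⟨h1, h2, ?_⟩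
        have h3 := hrel t h1 h2
        tauto
    · rintro (⟨h1, h2, -⟩ | ⟨h1, h2, -⟩) <;> exact ⟨h1, h2⟩
  · rw [Set.disjoint_left]
    intro t htC htD
    rw [hmemC] at htC
    rw [hmemD] at htD
    obtain ⟨h1, h2, hjC⟩ := htC
    obtain ⟨-, -, hjD⟩ := htD
    exact ((hrel t h1 h2).1 hjC) hjD
end

section
/- Let C2 ⊊ C1 ⊆ F_q^n be nested linear codes and 1 ≤ m ≤ dim(C1)-dim(C2). Then M_m(C1,C2) = min { d ∈ {1,...,n} : K_d(C1,C2) ≥ m }, where K_d(C1,C2) = max over subsets I ⊆ {1,...,n} of size d of (dim(C1 ∩ V_I) - dim(C2 ∩ V_I)), and V_I = { x ∈ F_q^n : x_i = 0 for i ∉ I }. -/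
open Filter Topology

section Aux

open Module Submodule

set_option synthInstance.maxHeartbeats 400000 in
/-- Any submodule contains a submodule of any smaller finrank. -/
lemma aux_exists_sub {F : Type} [Field F] {n : ℕ}
    (W : Submodule F (Fin n → F)) (m : ℕ) (h : m ≤ finrank F W) :
    ∃ D : Submodule F (Fin n → F), D ≤ W ∧ finrank F D = m := by
  have b := Module.finBasis F W
  let f : Fin m → (Fin n → F) := fun i => (b (Fin.castLE h i) : Fin n → F)
  have hli : LinearIndependent F f := by
    have h1 : LinearIndependent F (fun i : Fin m => b (Fin.castLE h i)) :=
      b.linearIndependent.comp _ (Fin.castLE_injective h)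
    exact h1.map' W.subtype (ker_subtype W)
  refine ⟨span F (Set.range f), ?_, ?_⟩
  · rw [span_le]; rintro _ ⟨i, rfl⟩; exact (b (Fin.castLE h i)).2
  · rw [finrank_span_eq_card hli, Fintype.card_fin]

set_option synthInstance.maxHeartbeats 400000 in
/-- Relative complement with the right dimension. -/
lemma aux_exists_compl {F : Type} [Field F] {n : ℕ}
    (A B : Submodule F (Fin n → F)) (hBA : B ≤ A) :
    ∃ D : Submodule F (Fin n → F), D ≤ A ∧ D ⊓ B = ⊥ ∧
      finrank F D = finrank F A - finrank F B := by
  obtain ⟨W, hW⟩ := Submodule.exists_isCompl (B.comap A.subtype)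
  refine ⟨W.map A.subtype, ?_, ?_, ?_⟩
  · rintro _ ⟨w, _, rfl⟩; exact (w : A).2
  · rw [eq_bot_iff]
    rintro x ⟨⟨w, hw, rfl⟩, hxB⟩
    have hmem : w ∈ B.comap A.subtype ⊓ W := ⟨hxB, hw⟩
    rw [hW.inf_eq_bot, Submodule.mem_bot] at hmem
    simp [hmem]
  · have h1 : finrank F (W.map A.subtype) = finrank F W :=
      Submodule.finrank_map_subtype_eq A W
    have h2 : finrank F (B.comap A.subtype) + finrank F W = finrank F A :=
      Submodule.finrank_add_eq_of_isCompl hW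
    have h3 : finrank F (B.comap A.subtype) = finrank F B :=
      (Submodule.comapSubtypeEquivOfLe hBA).finrank_eq
    omega

lemma aux_codeSupp_le {F : Type} [Field F] {n : ℕ}
    {D : Submodule F (Fin n → F)} {I : Finset (Fin n)} (h : D ≤ VI F I) :
    codeSupp D ≤ I.card := by
  have hsub : {i : Fin n | ∃ d ∈ D, d i ≠ 0} ⊆ (I : Set (Fin n)) := by
    rintro i ⟨d, hd, hne⟩
    by_contra hi
    exact hne ((h hd) i hi)
  calc codeSupp D ≤ (I : Set (Fin n)).ncard := Set.ncard_le_ncard hsub (Set.toFinite _)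
    _ = I.card := Set.ncard_coe_finset I

lemma aux_rdlp_bddAbove {F : Type} [Field F] [Fintype F] {n : ℕ}
    (d : ℕ) (C1 C2 : Submodule F (Fin n → F)) :
    BddAbove {k : ℕ | ∃ I : Finset (Fin n), I.card = d ∧
      Module.finrank F ↥(C1 ⊓ VI F I) - Module.finrank F ↥(C2 ⊓ VI F I) = k} := by
  refine ⟨n, ?_⟩
  rintro k ⟨I, hI, rfl⟩
  have h1 : finrank F ↥(C1 ⊓ VI F I) ≤ n := by
    have := Submodule.finrank_le (C1 ⊓ VI F I)
    rwa [Module.finrank_fin_fun] at this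
  omega

end Aux

/-- The `m`-th relative generalized Hamming weight equals the smallest `d` in
`{1, …, n}` such that the relative dimension length profile satisfies
`K_d(C1,C2) ≥ m`. -/
theorem rghw_eq_sInf_rdlp {F : Type} [Field F] [Fintype F] {n m : ℕ}
    (C1 C2 : Submodule F (Fin n → F)) (hC : C2 < C1)
    (hm1 : 1 ≤ m) (hm2 : m ≤ Module.finrank F ↥C1 - Module.finrank F ↥C2) :
    RGHW m C1 C2 = sInf {d : ℕ | 1 ≤ d ∧ d ≤ n ∧ m ≤ RDLP d C1 C2} := by
  classical
  set S : Set ℕ := {w : ℕ | ∃ D : Submodule F (Fin n → F),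
    D ≤ C1 ∧ Module.finrank F ↥D = m ∧ D ⊓ C2 = ⊥ ∧ codeSupp D = w} with hSdef
  set T : Set ℕ := {d : ℕ | 1 ≤ d ∧ d ≤ n ∧ m ≤ RDLP d C1 C2} with hTdef
  -- S is nonempty
  have hS : S.Nonempty := by
    obtain ⟨D0, hD0C1, hD0C2, hD0rk⟩ := aux_exists_compl C1 C2 hC.le
    obtain ⟨D, hDD0, hDrk⟩ := aux_exists_sub D0 m (by omega)
    refine ⟨codeSupp D, D, hDD0.trans hD0C1, hDrk, ?_, rfl⟩
    rw [eq_bot_iff, ← hD0C2]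
    exact inf_le_inf_right _ hDD0
  -- every element of S is in T
  have hST : S ⊆ T := by
    rintro w ⟨D, hDC1, hDrk, hDC2, rfl⟩
    have hfin : ({i : Fin n | ∃ d ∈ D, d i ≠ 0}).Finite := Set.toFinite _
    set I : Finset (Fin n) := hfin.toFinset with hIdef
    have hIcard : I.card = codeSupp D := by
      rw [codeSupp, ← Set.ncard_coe_finset]
      congr 1
      simp [hIdef]
    have hDVI : D ≤ VI F I := by
      intro x hx i hi
      by_contra hne
      exact hi (by simp [hIdef]; exact ⟨x, hx, hne⟩)
    have hDbot : D ≠ ⊥ := by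
      intro hbot
      rw [hbot, finrank_bot] at hDrk
      omega
    have hpos : 1 ≤ codeSupp D := by
      obtain ⟨x, hx, hxne⟩ := (Submodule.ne_bot_iff D).mp hDbot
      obtain ⟨i, hi⟩ := Function.ne_iff.mp hxne
      have : ({i : Fin n | ∃ d ∈ D, d i ≠ 0}).Nonempty := ⟨i, x, hx, hi⟩
      exact (Set.ncard_pos (Set.toFinite _)).mpr this
    have hlen : codeSupp D ≤ n := by
      have := aux_codeSupp_le hDVI
      have h2 := I.card_le_univ
      simp only [Finset.card_univ, Fintype.card_fin] at h2
      omega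
    refine ⟨hpos, hlen, ?_⟩
    -- m ≤ RDLP (codeSupp D)
    have hkey : m ≤ Module.finrank F ↥(C1 ⊓ VI F I) - Module.finrank F ↥(C2 ⊓ VI F I) := by
      have hDle : D ≤ C1 ⊓ VI F I := le_inf hDC1 hDVI
      have hBle : C2 ⊓ VI F I ≤ C1 ⊓ VI F I := inf_le_inf_right _ hC.le
      have hinf : D ⊓ (C2 ⊓ VI F I) = ⊥ := by
        rw [eq_bot_iff, ← hDC2]
        exact le_inf inf_le_left (inf_le_right.trans inf_le_left)
      have hsum := Submodule.finrank_sup_add_finrank_inf_eq D (C2 ⊓ VI F I)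
      rw [hinf, finrank_bot, add_zero] at hsum
      have hle : Module.finrank F ↥(D ⊔ (C2 ⊓ VI F I)) ≤ Module.finrank F ↥(C1 ⊓ VI F I) :=
        Submodule.finrank_mono (sup_le hDle hBle)
      omega
    calc m ≤ _ := hkey
      _ ≤ RDLP (codeSupp D) C1 C2 :=
        le_csSup (aux_rdlp_bddAbove _ C1 C2) ⟨I, hIcard, rfl⟩
  -- for every d ∈ T there is w ∈ S with w ≤ d
  have hTS : ∀ d ∈ T, ∃ w ∈ S, w ≤ d := by
    rintro d ⟨hd1, hdn, hdm⟩
    -- the RDLP set is nonempty and its sSup is attained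
    have hne : {k : ℕ | ∃ I : Finset (Fin n), I.card = d ∧
        Module.finrank F ↥(C1 ⊓ VI F I) - Module.finrank F ↥(C2 ⊓ VI F I) = k}.Nonempty := by
      obtain ⟨I, _, hIcard⟩ := Finset.exists_subset_card_eq
        (show d ≤ (Finset.univ : Finset (Fin n)).card by simpa using hdn)
      exact ⟨_, I, hIcard, rfl⟩
    have hmem := Nat.sSup_mem hne (aux_rdlp_bddAbove d C1 C2)
    obtain ⟨I, hIcard, hIrk⟩ := hmem
    rw [RDLP] at hdm
    obtain ⟨D0, hD0le, hD0inf, hD0rk⟩ :=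
      aux_exists_compl (C1 ⊓ VI F I) (C2 ⊓ VI F I) (inf_le_inf_right _ hC.le)
    obtain ⟨D, hDD0, hDrk⟩ := aux_exists_sub D0 m (by omega)
    have hDVI : D ≤ VI F I := hDD0.trans (hD0le.trans inf_le_right)
    refine ⟨codeSupp D, ⟨D, hDD0.trans (hD0le.trans inf_le_left), hDrk, ?_, rfl⟩,
      (aux_codeSupp_le hDVI).trans_eq hIcard⟩
    rw [eq_bot_iff, ← hD0inf]
    intro x hx
    exact ⟨hDD0 hx.1, hx.2, hDVI hx.1⟩
  -- conclude
  have hTne : T.Nonempty := ⟨_, hST hS.some_mem⟩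
  rw [show RGHW m C1 C2 = sInf S from rfl]
  apply le_antisymm
  · obtain ⟨w, hwS, hwle⟩ := hTS _ (Nat.sInf_mem hTne)
    exact le_trans (Nat.sInf_le hwS) hwle
  · exact Nat.sInf_le (hST (Nat.sInf_mem hS))
end

section
/- Let H ⊆ ℕ be a numerical semigroup (0 ∈ H, closed under addition, finite complement in ℕ) with genus g = #(ℕ \ H) and conductor c (the smallest integer such that all integers ≥ c are in H). Let 1 ≤ m ≤ g, and suppose i_1 < i_2 < ... < i_{m-1} are integers with i_{m-1} ≤ -1 and i_1 ≤ -(m-1). Then #{ α ∈ ∪_{s=1}^{m-1}(i_s + H) : α ∉ H } ≥ (m-1) + (m - (c - g) + h_{c-m}), where h_γ = #(H ∩ (0,γ]) for 0 ≤ γ ≤ c. -/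
/-- Counting lemma for numerical semigroups: let `H ⊆ ℕ` be a numerical
semigroup of genus `g` and conductor `c`, let `1 ≤ m ≤ g`, and let
`i_1 < ⋯ < i_{m-1}` be integers with `i_{m-1} ≤ -1` and `i_1 ≤ -(m-1)`.
Then the number of `α ∈ ∪_s (i_s + H)` with `α ∉ H` is at least
`(m-1) + (m - (c - g) + h_{c-m})`, where `h_γ = #(H ∩ (0,γ])`. -/
theorem semigroup_gap_count (H : Set ℕ)
    (h0 : 0 ∈ H) (hadd : ∀ a ∈ H, ∀ b ∈ H, a + b ∈ H)
    (hfin : (Hᶜ : Set ℕ).Finite)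
    (g c : ℕ) (hg : g = (Hᶜ : Set ℕ).ncard)
    (hc : c = sInf {c' : ℕ | ∀ x : ℕ, c' ≤ x → x ∈ H})
    (m : ℕ) (hm1 : 1 ≤ m) (hmg : m ≤ g)
    (i : Fin (m - 1) → ℤ) (hmono : StrictMono i)
    (hlast : ∀ s : Fin (m - 1), (s : ℕ) = m - 2 → i s ≤ -1)
    (hfirst : ∀ s : Fin (m - 1), (s : ℕ) = 0 → i s ≤ -((m : ℤ) - 1)) :
    ((m : ℤ) - 1) + ((m : ℤ) - ((c : ℤ) - (g : ℤ)) +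
        ((H ∩ Set.Ioc 0 (c - m)).ncard : ℤ)) ≤
      ({α : ℤ | (∃ s : Fin (m - 1), ∃ h ∈ H, α = i s + (h : ℤ)) ∧
        α ∉ ((↑) '' H : Set ℤ)}.ncard : ℤ) := by
  -- basic conductor facts
  have hPne : {c' : ℕ | ∀ x : ℕ, c' ≤ x → x ∈ H}.Nonempty := by
    obtain ⟨N, hN⟩ := hfin.bddAbove
    exact ⟨N + 1, fun x hx => by
      by_contra hxH
      exact absurd (hN hxH) (by omega)⟩
  have hcH : ∀ x : ℕ, c ≤ x → x ∈ H := by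
    rw [hc]; exact Nat.sInf_mem hPne
  have hgap : ∀ n : ℕ, n ∉ H → 1 ≤ n ∧ n < c := by
    intro n hn
    constructor
    · rcases Nat.eq_zero_or_pos n with h | h
      · exact absurd (h ▸ h0) hn
      · exact h
    · by_contra h
      exact hn (hcH n (by omega))
  -- Hᶜ ⊆ Ioc 0 (c-1) hence g ≤ c - 1, so m < c
  have hgc : g ≤ c - 1 := by
    rw [hg, show c - 1 = (Finset.Ioc 0 (c-1)).card from (Nat.card_Ioc 0 (c-1)).symm,
      ← Set.ncard_coe_finset]
    refine Set.ncard_le_ncard ?_ (Finset.Ioc 0 (c-1)).finite_toSet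
    intro n hn
    have := hgap n hn
    simp only [Finset.coe_Ioc, Set.mem_Ioc]
    omega
  have hmc : m < c := by
    have : 1 ≤ g := le_trans hm1 hmg
    omega
  -- the three sets
  set A : Set ℤ := {α : ℤ | (∃ s : Fin (m - 1), ∃ h ∈ H, α = i s + (h : ℤ)) ∧
        α ∉ ((↑) '' H : Set ℤ)} with hA
  set I : Set ℤ := Set.range i with hI
  set Glo : Set ℕ := Hᶜ ∩ Set.Ioc 0 (c - m) with hGlo
  set Ghi : Set ℕ := Hᶜ ∩ Set.Ioi (c - m) with hGhi
  set G : Set ℤ := (↑) '' Ghi with hG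
  -- all i s are negative
  have hineg : ∀ s : Fin (m - 1), i s ≤ -1 := by
    intro s
    have hsl := s.isLt
    have hm2 : m - 2 < m - 1 := by omega
    have hlast' := hlast ⟨m - 2, hm2⟩ rfl
    have : s ≤ ⟨m - 2, hm2⟩ := by
      rcases s with ⟨v, hv⟩
      exact Fin.mk_le_mk.mpr (by omega)
    exact le_trans (hmono.monotone this) hlast'
  -- I ⊆ A
  have hIA : I ⊆ A := by
    rintro α ⟨s, rfl⟩
    refine ⟨⟨s, 0, h0, by simp⟩, ?_⟩
    rintro ⟨n, _, hn⟩
    have := hineg s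
    omega
  -- G ⊆ A
  have hGA : G ⊆ A := by
    rintro α ⟨n, ⟨hnH, hnlo⟩, rfl⟩
    have hn := hgap n hnH
    simp only [Set.mem_Ioi] at hnlo
    have hm2 : m ≥ 2 := by omega
    have h0m : (0 : ℕ) < m - 1 := by omega
    have hi0 := hfirst ⟨0, h0m⟩ rfl
    have hk : (c : ℤ) ≤ (n : ℤ) - i ⟨0, h0m⟩ := by
      push_cast
      omega
    refine ⟨⟨⟨0, h0m⟩, ((n : ℤ) - i ⟨0, h0m⟩).toNat, ?_, ?_⟩, ?_⟩
    · apply hcH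
      omega
    · push_cast
      rw [Int.toNat_of_nonneg (by omega)]
      ring
    · rintro ⟨k, hkH, hkn⟩
      have : k = n := by exact_mod_cast hkn
      exact hnH (this ▸ hkH)
  -- disjointness and finiteness
  have hIG : Disjoint I G := by
    rw [Set.disjoint_left]
    rintro α ⟨s, rfl⟩ ⟨n, _, hn⟩
    have := hineg s
    omega
  have hIfin : I.Finite := Set.finite_range i
  have hGhifin : Ghi.Finite := hfin.subset (Set.inter_subset_left)
  have hGfin : G.Finite := hGhifin.image _
  have hAfin : A.Finite := by
    apply Set.Finite.subset (Set.finite_iUnion (fun s : Fin (m-1) => Set.finite_Ico (i s) (c : ℤ)))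
    rintro α ⟨⟨s, h, hh, rfl⟩, hni⟩
    refine Set.mem_iUnion.mpr ⟨s, ?_, ?_⟩
    · simp
    · by_contra hge
      push_neg at hge
      have hge' : (c : ℤ) ≤ i s + h := hge
      have h1 : (0:ℤ) ≤ i s + h := le_trans (by positivity) hge'
      refine hni ⟨(i s + h).toNat, hcH _ ?_, Int.toNat_of_nonneg h1⟩
      omega
  -- cardinality computations
  have hcardI : I.ncard = m - 1 := by
    rw [hI, ← Set.image_univ, Set.ncard_image_of_injective _ hmono.injective,
      Set.ncard_univ, Nat.card_eq_fintype_card, Fintype.card_fin]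
  have hcardG : G.ncard = Ghi.ncard := Set.ncard_image_of_injective _ (fun a b => by exact_mod_cast id)
  -- split of gaps
  have hsplit : Glo.ncard + Ghi.ncard = g := by
    rw [hg, ← Set.ncard_union_eq ?_ (hfin.subset Set.inter_subset_left) hGhifin]
    · congr 1
      ext n
      simp only [hGlo, hGhi, Set.mem_union, Set.mem_inter_iff, Set.mem_Ioc, Set.mem_Ioi,
        Set.mem_compl_iff]
      constructor
      · rintro (⟨h, _⟩ | ⟨h, _⟩) <;> exact h
      · intro h
        have := hgap n h
        by_cases hn : n ≤ c - m
        · exact Or.inl ⟨h, by omega, hn⟩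
        · exact Or.inr ⟨h, by omega⟩
    · rw [Set.disjoint_left]
      rintro n ⟨_, _, h1⟩ ⟨_, h2⟩
      simp only [Set.mem_Ioi] at h2
      omega
  -- split of the interval (0, c-m]
  have hinterval : (H ∩ Set.Ioc 0 (c - m)).ncard + Glo.ncard = c - m := by
    rw [← Set.ncard_union_eq ?_ ?_ ?_]
    · have : (H ∩ Set.Ioc 0 (c-m)) ∪ Glo = Set.Ioc 0 (c - m) := by
        ext n
        simp only [hGlo, Set.mem_union, Set.mem_inter_iff, Set.mem_compl_iff]
        tauto
      rw [this, ← Finset.coe_Ioc, Set.ncard_coe_finset, Nat.card_Ioc]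
      omega
    · rw [Set.disjoint_left]
      rintro n ⟨h1, _⟩ ⟨h2, _⟩
      exact h2 h1
    · exact Set.Finite.subset (Set.finite_Ioc 0 (c-m)) Set.inter_subset_right
    · exact hfin.subset Set.inter_subset_left
  -- final count
  have hsub : I ∪ G ⊆ A := Set.union_subset hIA hGA
  have hcard : (m - 1) + Ghi.ncard ≤ A.ncard := by
    calc (m - 1) + Ghi.ncard = (I ∪ G).ncard := by
          rw [Set.ncard_union_eq hIG hIfin hGfin, hcardI, hcardG]
      _ ≤ A.ncard := Set.ncard_le_ncard hsub hAfin
  have hcm' : ((c - m : ℕ) : ℤ) = (c : ℤ) - m := by omega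
  zify at hcard hsplit hinterval
  omega
end

section
/- Fix integers 1 ≤ k2 < k1 < n, 1 ≤ d ≤ n, 1 ≤ d^⊥ ≤ n, 1 ≤ s ≤ min{d, k1-k2}, 1 ≤ s^⊥ ≤ min{d^⊥, k1-k2}. Let N(d, s') be the number of nested linear code pairs C2 ⊊ C1 ⊆ F_q^n with dim(C1)=k1, dim(C2)=k2 and K_d(C1,C2) ≥ s', and N^⊥(d^⊥, s'') the analogous count with K_{d^⊥}(C2^⊥,C1^⊥) ≥ s''. If the total number of such nested pairs, N_1(n,k2)·N_1(n-k2,k1-k2), is strictly greater than N(d,s) + N^⊥(d^⊥,s^⊥), then there exists a nested pair C2 ⊊ C1 ⊆ F_q^n with dim(C1)=k1, dim(C2)=k2, M_s(C1,C2) > d and M_{s^⊥}(C2^⊥,C1^⊥) > d^⊥. -/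
open Filter Topology

/-- The Gaussian binomial `N_1(w,u)` (number of `u`-dimensional subspaces of
`F_q^w`), as a rational number. -/
noncomputable def N1 (q w u : ℕ) : ℚ :=
  (∏ i ∈ Finset.range u, ((q : ℚ) ^ w - (q : ℚ) ^ i)) /
    (∏ i ∈ Finset.range u, ((q : ℚ) ^ u - (q : ℚ) ^ i))

/-!
If `K_d(C₁, C₂) < s` then `M_s(C₁, C₂) > d`: an `s`-dimensional subcode `D ≤ C₁` meeting `C₂`
trivially with support of size at most `d` lies in some `V_I` with `#I = d`, and then
`dim (C₁ ∩ V_I) ≥ s + dim (C₂ ∩ V_I)`. Applied to `(C₁, C₂)` and to `(C₂^⊥, C₁^⊥)`, this puts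
every nested pair failing the conclusion into one of the two counted families, so there are at
most `N(d, s) + N^⊥(d^⊥, s^⊥)` nested pairs in all. But they number exactly
`N_1(n, k₂) N_1(n - k₂, k₁ - k₂)`: the `C₁` above a fixed `C₂` are the `(k₁ - k₂)`-dimensional
subspaces of `F^n ⧸ C₂`, and each `k`-dimensional subspace of `F^w` is spanned by exactly
`∏_{i<k} (q^k - q^i)` of the `∏_{i<k} (q^w - q^i)` linearly independent `k`-tuples.
-/

open Module

theorem Nat.cast_card_sigma_of_card_eq {β R : Type*} {γ : β → Type*} [Finite β]
    [∀ b, Finite (γ b)] [Semiring R] {c : R} (h : ∀ b, (Nat.card (γ b) : R) = c) :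
    (Nat.card (Σ b, γ b) : R) = Nat.card β * c := by
  have := Fintype.ofFinite β
  rw [Nat.card_sigma, Nat.cast_sum, Finset.sum_congr rfl fun b _ => h b, Finset.sum_const,
    Finset.card_univ, nsmul_eq_mul, Nat.card_eq_fintype_card]

theorem Nat.card_subtype_le_add {α : Type*} [Finite α] {p q r : α → Prop}
    (h : ∀ a, p a → q a ∨ r a) :
    Nat.card {a // p a} ≤ Nat.card {a // q a} + Nat.card {a // r a} := by
  show Nat.card {a | p a} ≤ Nat.card {a | q a} + Nat.card {a | r a}
  simp only [Nat.card_coe_set_eq]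
  exact (Set.ncard_le_ncard h).trans (Set.ncard_union_le _ _)

theorem prod_pow_sub_pow_ne_zero {R : Type*} [CommRing R] [LinearOrder R] [IsStrictOrderedRing R]
    {q : R} (hq : 1 < q) (k : ℕ) :
    ∏ i ∈ Finset.range k, (q ^ k - q ^ i) ≠ 0 :=
  Finset.prod_ne_zero_iff.mpr fun _ hi =>
    sub_ne_zero.mpr (pow_lt_pow_right₀ hq (Finset.mem_range.mp hi)).ne'

section Quotient

variable {K V : Type*} [DivisionRing K] [AddCommGroup V] [Module K V] [FiniteDimensional K V]

theorem Submodule.finrank_comap_mkQ (p : Submodule K V) (D : Submodule K (V ⧸ p)) :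
    finrank K (D.comap p.mkQ) = finrank K D + finrank K p := by
  have h := (p.mkQ.domRestrict (D.comap p.mkQ)).finrank_range_add_finrank_ker
  rwa [LinearMap.range_domRestrict, Submodule.map_comap_eq_of_surjective p.mkQ_surjective,
    LinearMap.ker_domRestrict, Submodule.ker_mkQ,
    (Submodule.comapSubtypeEquivOfLe (p.le_comap_mkQ D)).finrank_eq, eq_comm] at h

def Submodule.gtFinrankEquivQuotient (p : Submodule K V) {k : ℕ} (hk : finrank K p < k) :
    {C : Submodule K V // p < C ∧ finrank K C = k} ≃
      {D : Submodule K (V ⧸ p) // finrank K D = k - finrank K p} where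
  toFun C := ⟨C.1.map p.mkQ, by
    have h := p.finrank_comap_mkQ (C.1.map p.mkQ)
    rw [Submodule.comap_map_mkQ, sup_eq_right.mpr C.2.1.le, C.2.2] at h
    omega⟩
  invFun D := ⟨D.1.comap p.mkQ, by
    have h := p.finrank_comap_mkQ D.1
    refine ⟨Submodule.lt_of_le_of_finrank_lt_finrank (p.le_comap_mkQ D.1) ?_, ?_⟩ <;> omega⟩
  left_inv C := Subtype.ext <| (p.comap_map_mkQ C.1).trans (sup_eq_right.mpr C.2.1.le)
  right_inv D := Subtype.ext <| Submodule.map_comap_eq_of_surjective p.mkQ_surjective D.1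

end Quotient

section Counting

variable {F V : Type*} [Field F] [Fintype F] [AddCommGroup V] [Module F V] [Finite V]

theorem cast_natCard_linearIndependent {k : ℕ} (hk : k ≤ finrank F V) :
    (Nat.card {v : Fin k → V // LinearIndependent F v} : ℚ) =
      ∏ i ∈ Finset.range k, ((Fintype.card F : ℚ) ^ finrank F V - Fintype.card F ^ i) := by
  rw [card_linearIndependent hk, Nat.cast_prod, ← Fin.prod_univ_eq_prod_range]
  refine Finset.prod_congr rfl fun _ _ => ?_
  rw [Nat.cast_sub (Nat.pow_le_pow_right Fintype.card_pos (by omega))]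
  push_cast
  rfl

def linearIndependentSpanEquiv {k : ℕ} (W : Submodule F V) (hW : finrank F W = k) :
    {v : {v : Fin k → V // LinearIndependent F v} // Submodule.span F (Set.range v.1) = W} ≃
      {w : Fin k → W // LinearIndependent F w} where
  toFun v := ⟨fun i => ⟨v.1.1 i, v.2.le (Submodule.subset_span ⟨i, rfl⟩)⟩,
    LinearIndependent.of_comp W.subtype v.1.2⟩
  invFun w := ⟨⟨W.subtype ∘ w.1, w.2.map' W.subtype W.ker_subtype⟩, by
    rw [Set.range_comp, ← Submodule.map_span,
      w.2.span_eq_top_of_card_eq_finrank' (by rw [Fintype.card_fin, hW]),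
      Submodule.map_top, Submodule.range_subtype]⟩
  left_inv _ := rfl
  right_inv _ := rfl

theorem cast_natCard_finrank_eq_N1 {k : ℕ} (hk : k ≤ finrank F V) :
    (Nat.card {W : Submodule F V // finrank F W = k} : ℚ) =
      N1 (Fintype.card F) (finrank F V) k := by
  have hq : (1 : ℚ) < Fintype.card F := by exact_mod_cast Fintype.one_lt_card
  let span : {v : Fin k → V // LinearIndependent F v} → {W : Submodule F V // finrank F W = k} :=
    fun v => ⟨Submodule.span F (Set.range v.1), by rw [finrank_span_eq_card v.2, Fintype.card_fin]⟩
  have hfiber : ∀ W, (Nat.card {v // span v = W} : ℚ) =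
      ∏ i ∈ Finset.range k, ((Fintype.card F : ℚ) ^ k - Fintype.card F ^ i) := by
    rintro ⟨W, hW⟩
    simp only [span, Subtype.mk.injEq]
    rw [Nat.card_congr (linearIndependentSpanEquiv W hW), cast_natCard_linearIndependent hW.ge, hW]
  have h := Nat.cast_card_sigma_of_card_eq hfiber
  rw [Nat.card_congr (Equiv.sigmaFiberEquiv span), cast_natCard_linearIndependent hk] at h
  rw [N1, h, mul_div_cancel_right₀ _ (prod_pow_sub_pow_ne_zero hq k)]

def nestedPairsEquivSigma (k1 k2 : ℕ) :
    {P : Submodule F V × Submodule F V // P.2 < P.1 ∧ finrank F P.1 = k1 ∧ finrank F P.2 = k2} ≃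
      Σ C₂ : {C : Submodule F V // finrank F C = k2},
        {C₁ : Submodule F V // C₂.1 < C₁ ∧ finrank F C₁ = k1} where
  toFun P := ⟨⟨P.1.2, P.2.2.2⟩, ⟨P.1.1, P.2.1, P.2.2.1⟩⟩
  invFun x := ⟨(x.2.1, x.1.1), x.2.2.1, x.2.2.2, x.1.2⟩
  left_inv _ := rfl
  right_inv _ := rfl

theorem cast_natCard_nestedPairs {k1 k2 : ℕ} (hk : k2 < k1) (hk1 : k1 ≤ finrank F V) :
    (Nat.card {P : Submodule F V × Submodule F V //
        P.2 < P.1 ∧ finrank F P.1 = k1 ∧ finrank F P.2 = k2} : ℚ) =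
      N1 (Fintype.card F) (finrank F V) k2 *
        N1 (Fintype.card F) (finrank F V - k2) (k1 - k2) := by
  rw [Nat.card_congr (nestedPairsEquivSigma k1 k2), ← cast_natCard_finrank_eq_N1 (by omega)]
  refine Nat.cast_card_sigma_of_card_eq fun C₂ => ?_
  have := Module.finite_of_finite F (M := V ⧸ C₂.1)
  have hquot : finrank F (V ⧸ C₂.1) = finrank F V - k2 := by
    rw [Submodule.finrank_quotient, C₂.2]
  rw [Nat.card_congr (C₂.1.gtFinrankEquivQuotient (C₂.2.trans_lt hk)), C₂.2,
    cast_natCard_finrank_eq_N1 (by omega), hquot]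

end Counting

section Subspaces

variable {K V : Type*} [DivisionRing K] [AddCommGroup V] [Module K V]

theorem Submodule.exists_le_finrank_eq (W : Submodule K V) {s : ℕ} (hs : s ≤ finrank K W) :
    ∃ D ≤ W, finrank K D = s := by
  obtain ⟨v, hv⟩ := exists_linearIndependent_of_le_finrank hs
  refine ⟨(Submodule.span K (Set.range v)).map W.subtype, Submodule.map_subtype_le _ _, ?_⟩
  rw [Submodule.finrank_map_subtype_eq, finrank_span_eq_card hv, Fintype.card_fin]

variable [FiniteDimensional K V]

theorem Submodule.exists_le_finrank_eq_inf_eq_bot {A B : Submodule K V} (hBA : B ≤ A) {s : ℕ}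
    (hs : s + finrank K B ≤ finrank K A) : ∃ D ≤ A, finrank K D = s ∧ D ⊓ B = ⊥ := by
  obtain ⟨W, hW⟩ := B.exists_isCompl
  have hsup : B ⊔ W ⊓ A = A := by rw [← sup_inf_assoc_of_le W hBA, hW.sup_eq_top, top_inf_eq]
  have hinf : W ⊓ A ⊓ B = ⊥ := eq_bot_iff.mpr <| by
    rw [← hW.inf_eq_bot, inf_comm B]
    exact inf_le_inf_right B inf_le_left
  have hrank := Submodule.finrank_sup_add_finrank_inf_eq B (W ⊓ A)
  rw [hsup, inf_comm, hinf, finrank_bot] at hrank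
  obtain ⟨D, hDW, hD⟩ := (W ⊓ A).exists_le_finrank_eq (s := s) (by omega)
  exact ⟨D, hDW.trans inf_le_right, hD, eq_bot_iff.mpr (hinf ▸ inf_le_inf_right B hDW)⟩

end Subspaces

section Codes

variable {F : Type} [Field F] {n : ℕ}

theorem dualCode_eq_orthogonal (C : Submodule F (Fin n → F)) :
    dualCode C = (Matrix.toBilin' (1 : Matrix (Fin n) (Fin n) F)).orthogonal C := by
  ext y
  simp [dualCode, LinearMap.BilinForm.mem_orthogonal_iff, Matrix.toBilin'_apply', dotProduct]

theorem finrank_dualCode (C : Submodule F (Fin n → F)) :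
    finrank F (dualCode C) = n - finrank F C := by
  rw [dualCode_eq_orthogonal, LinearMap.BilinForm.finrank_orthogonal
    (Matrix.nondegenerate_of_det_ne_zero (by simp)).toBilin', finrank_fin_fun]

theorem dualCode_anti {C₁ C₂ : Submodule F (Fin n → F)} (h : C₂ ≤ C₁) :
    dualCode C₁ ≤ dualCode C₂ :=
  fun _ hy x hx => hy x (h hx)

theorem exists_card_eq_le_VI_of_codeSupp_le {D : Submodule F (Fin n → F)} {d : ℕ}
    (hD : codeSupp D ≤ d) (hd : d ≤ n) : ∃ I : Finset (Fin n), I.card = d ∧ D ≤ VI F I := by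
  classical
  set J := {i : Fin n | ∃ x ∈ D, x i ≠ 0}.toFinset
  obtain ⟨I, hJI, hI⟩ := Finset.exists_superset_card_eq (s := J) (n := d)
    (by rwa [← Set.ncard_eq_toFinset_card']) (by simpa using hd)
  refine ⟨I, hI, fun x hx i hi => ?_⟩
  by_contra hxi
  exact hi (hJI (Set.mem_toFinset.mpr ⟨x, hx, hxi⟩))

theorem sub_le_RDLP (A B : Submodule F (Fin n → F)) (I : Finset (Fin n)) :
    finrank F ↥(A ⊓ VI F I) - finrank F ↥(B ⊓ VI F I) ≤ RDLP I.card A B := by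
  refine le_csSup ⟨n, ?_⟩ ⟨I, rfl, rfl⟩
  rintro _ ⟨J, -, rfl⟩
  have := Submodule.finrank_le (A ⊓ VI F J)
  rw [finrank_fin_fun] at this
  omega

theorem lt_RGHW_of_RDLP_lt {A B : Submodule F (Fin n → F)} (hBA : B ≤ A) {s d : ℕ}
    (hs : s + finrank F B ≤ finrank F A) (hd : d ≤ n) (h : RDLP d A B < s) :
    d < RGHW s A B := by
  by_contra! hle
  obtain ⟨D₀, hD₀A, hD₀, hD₀B⟩ := Submodule.exists_le_finrank_eq_inf_eq_bot hBA hs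
  obtain ⟨D, hDA, hD, hDB, hDsupp⟩ : RGHW s A B ∈ _ :=
    Nat.sInf_mem ⟨_, D₀, hD₀A, hD₀, hD₀B, rfl⟩
  obtain ⟨I, rfl, hDI⟩ := exists_card_eq_le_VI_of_codeSupp_le (hDsupp.trans_le hle) hd
  have hinf : D ⊓ (B ⊓ VI F I) = ⊥ := eq_bot_iff.mpr (hDB ▸ inf_le_inf_left D inf_le_left)
  have hrank := Submodule.finrank_sup_add_finrank_inf_eq D (B ⊓ VI F I)
  have hmono := Submodule.finrank_mono (sup_le (le_inf hDA hDI) (inf_le_inf_right _ hBA))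
  rw [hinf, finrank_bot, hD] at hrank
  have := sub_le_RDLP A B I
  omega

end Codes

theorem exists_pair_large_rghw_general {F : Type} [Field F] [Fintype F]
    {n k1 k2 d dp s sp : ℕ}
    (hk12 : k2 < k1) (hk1n : k1 < n)
    (hdn : d ≤ n) (hdpn : dp ≤ n)
    (hs2 : s ≤ min d (k1 - k2))
    (hsp2 : sp ≤ min dp (k1 - k2))
    (hcount :
      (Nat.card {P : Submodule F (Fin n → F) × Submodule F (Fin n → F) //
          P.2 < P.1 ∧ Module.finrank F ↥P.1 = k1 ∧ Module.finrank F ↥P.2 = k2 ∧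
          s ≤ RDLP d P.1 P.2} : ℚ) +
        (Nat.card {P : Submodule F (Fin n → F) × Submodule F (Fin n → F) //
          P.2 < P.1 ∧ Module.finrank F ↥P.1 = k1 ∧ Module.finrank F ↥P.2 = k2 ∧
          sp ≤ RDLP dp (dualCode P.2) (dualCode P.1)} : ℚ) <
      N1 (Fintype.card F) n k2 * N1 (Fintype.card F) (n - k2) (k1 - k2)) :
    ∃ C1 C2 : Submodule F (Fin n → F), C2 < C1 ∧
      Module.finrank F ↥C1 = k1 ∧ Module.finrank F ↥C2 = k2 ∧
      d < RGHW s C1 C2 ∧ dp < RGHW sp (dualCode C2) (dualCode C1) := by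
  by_contra! hcon
  have hcover : ∀ P : Submodule F (Fin n → F) × Submodule F (Fin n → F),
      P.2 < P.1 ∧ finrank F P.1 = k1 ∧ finrank F P.2 = k2 →
        (P.2 < P.1 ∧ finrank F P.1 = k1 ∧ finrank F P.2 = k2 ∧ s ≤ RDLP d P.1 P.2) ∨
        (P.2 < P.1 ∧ finrank F P.1 = k1 ∧ finrank F P.2 = k2 ∧
          sp ≤ RDLP dp (dualCode P.2) (dualCode P.1)) := by
    rintro ⟨C₁, C₂⟩ ⟨hlt, h₁, h₂⟩
    refine (em (s ≤ RDLP d C₁ C₂)).imp (fun h => ⟨hlt, h₁, h₂, h⟩) fun h => ⟨hlt, h₁, h₂, ?_⟩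
    by_contra! h'
    have hprimal := lt_RGHW_of_RDLP_lt hlt.le (by omega) hdn (not_le.mp h)
    have hdual := lt_RGHW_of_RDLP_lt (dualCode_anti hlt.le)
      (by rw [finrank_dualCode, finrank_dualCode]; omega) hdpn h'
    exact (hcon C₁ C₂ hlt h₁ h₂ hprimal).not_gt hdual
  have htotal := cast_natCard_nestedPairs (F := F) (V := Fin n → F) hk12
    (by rw [finrank_fin_fun]; omega)
  have hle := (Nat.cast_le (α := ℚ)).mpr (Nat.card_subtype_le_add hcover)
  rw [finrank_fin_fun] at htotal
  push_cast at hle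
  linarith

/-- Existence of a nested code pair with large relative generalized Hamming
weights on both the primary and the dual side: if the total number
`N_1(n,k2)·N_1(n-k2,k1-k2)` of nested pairs with the given dimensions exceeds
the number of pairs with `K_d(C1,C2) ≥ s` plus the number of pairs with
`K_{d^⊥}(C2^⊥,C1^⊥) ≥ s^⊥`, then some pair satisfies `M_s(C1,C2) > d` and
`M_{s^⊥}(C2^⊥,C1^⊥) > d^⊥`. -/
theorem exists_pair_large_rghw {F : Type} [Field F] [Fintype F]
    {n k1 k2 d dp s sp : ℕ}
    (hk2 : 1 ≤ k2) (hk12 : k2 < k1) (hk1n : k1 < n)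
    (hd1 : 1 ≤ d) (hdn : d ≤ n) (hdp1 : 1 ≤ dp) (hdpn : dp ≤ n)
    (hs1 : 1 ≤ s) (hs2 : s ≤ min d (k1 - k2))
    (hsp1 : 1 ≤ sp) (hsp2 : sp ≤ min dp (k1 - k2))
    (hcount :
      (Nat.card {P : Submodule F (Fin n → F) × Submodule F (Fin n → F) //
          P.2 < P.1 ∧ Module.finrank F ↥P.1 = k1 ∧ Module.finrank F ↥P.2 = k2 ∧
          s ≤ RDLP d P.1 P.2} : ℚ) +
        (Nat.card {P : Submodule F (Fin n → F) × Submodule F (Fin n → F) //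
          P.2 < P.1 ∧ Module.finrank F ↥P.1 = k1 ∧ Module.finrank F ↥P.2 = k2 ∧
          sp ≤ RDLP dp (dualCode P.2) (dualCode P.1)} : ℚ) <
      N1 (Fintype.card F) n k2 * N1 (Fintype.card F) (n - k2) (k1 - k2)) :
    ∃ C1 C2 : Submodule F (Fin n → F), C2 < C1 ∧
      Module.finrank F ↥C1 = k1 ∧ Module.finrank F ↥C2 = k2 ∧
      d < RGHW s C1 C2 ∧ dp < RGHW sp (dualCode C2) (dualCode C1) :=
  exists_pair_large_rghw_general hk12 hk1n hdn hdpn hs2 hsp2 hcount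
end
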